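/- Under the standing FISTA assumptions, with the one-step notation x := Ty, y_+ := x + ((τ−1)/τ_+)(x − x_-), x_+ := Ty_+, and for z ∈ dom h, setting u := τx − (τ−1)x_- − z, u_+ := τ_+ x_+ − (τ_+ − 1)x − z, μ := h(x) − h(z), μ_+ := h(x_+) − h(z), one has τ_+² μ_+ + (2γ)⁻¹‖u_+‖² ≤ τ_+(τ_+ − 1) μ + (2γ)⁻¹‖u‖². -/

import Mathlib

open Filter RealInnerProductSpace


lemma lineDeriv_aux {H : Type*} [NormedAddCommGroup H] [InnerProductSpace ℝ H] [CompleteSpace H]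
    {f : H → ℝ} {f' : H → H} (hf' : ∀ x, HasGradientAt f (f' x) x) (a b : H) (t : ℝ) :
    HasDerivAt (fun s : ℝ => f (a + s • (b - a))) ⟪f' (a + t • (b - a)), b - a⟫ t := by
  have hc : HasDerivAt (fun s : ℝ => a + s • (b - a)) (b - a) t := by
    simpa using ((hasDerivAt_id t).smul_const (b - a)).const_add a
  have hF := hasGradientAt_iff_hasFDerivAt.1 (hf' (a + t • (b - a)))
  have := hF.comp_hasDerivAt t hc
  simpa [InnerProductSpace.toDual_apply_apply, Function.comp_def] using this

lemma grad_convex_ineq {H : Type*} [NormedAddCommGroup H] [InnerProductSpace ℝ H] [CompleteSpace H]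
    {f : H → ℝ} {f' : H → H} (hfconv : ConvexOn ℝ Set.univ f)
    (hf' : ∀ x, HasGradientAt f (f' x) x) (a b : H) :
    f a + ⟪f' a, b - a⟫ ≤ f b := by
  have hconv : ConvexOn ℝ Set.univ (fun s : ℝ => f (a + s • (b - a))) := by
    have := hfconv.comp_affineMap (AffineMap.lineMap a b : ℝ →ᵃ[ℝ] H)
    simpa [Function.comp_def, AffineMap.lineMap_apply, add_comm] using this
  have h0 : HasDerivAt (fun s : ℝ => f (a + s • (b - a))) ⟪f' a, b - a⟫ 0 := by
    simpa using lineDeriv_aux hf' a b 0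
  have := hconv.le_slope_of_hasDerivAt (Set.mem_univ (0:ℝ)) (Set.mem_univ (1:ℝ))
    one_pos h0
  simp only [slope_def_field, zero_smul, add_zero, one_smul, sub_zero, div_one] at this
  have e : a + (b - a) = b := by abel
  rw [e] at this
  linarith

lemma descent_aux {H : Type*} [NormedAddCommGroup H] [InnerProductSpace ℝ H] [CompleteSpace H]
    {f : H → ℝ} {f' : H → H} {β : ℝ} (hβ : 0 < β)
    (hf' : ∀ x, HasGradientAt f (f' x) x)
    (hlip : ∀ x y, ‖f' x - f' y‖ ≤ β * ‖x - y‖) (a b : H) :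
    f b ≤ f a + ⟪f' a, b - a⟫ + β / 2 * ‖b - a‖ ^ 2 := by
  set ψ : ℝ → ℝ := fun t => f (a + t • (b - a)) - t * ⟪f' a, b - a⟫ - t ^ 2 * (β / 2) * ‖b - a‖ ^ 2 with hψ
  have hψd : ∀ t : ℝ, HasDerivAt ψ
      (⟪f' (a + t • (b - a)), b - a⟫ - ⟪f' a, b - a⟫ - 2 * t * (β / 2) * ‖b - a‖ ^ 2) t := by
    intro t
    have h1 := lineDeriv_aux hf' a b t
    have h2 : HasDerivAt (fun t : ℝ => t * ⟪f' a, b - a⟫) ⟪f' a, b - a⟫ t := by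
      simpa using (hasDerivAt_id t).mul_const ⟪f' a, b - a⟫
    have h3 : HasDerivAt (fun t : ℝ => t ^ 2 * (β / 2) * ‖b - a‖ ^ 2)
        (2 * t * (β / 2) * ‖b - a‖ ^ 2) t := by
      have := ((hasDerivAt_pow 2 t).mul_const (β / 2)).mul_const (‖b - a‖ ^ 2)
      simpa [pow_one, mul_comm, mul_assoc, mul_left_comm] using this
    exact (h1.sub h2).sub h3
  have hanti : AntitoneOn ψ (Set.Icc (0:ℝ) 1) := by
    apply antitoneOn_of_deriv_nonpos (convex_Icc 0 1)
    · exact fun t _ => (hψd t).differentiableAt.continuousAt.continuousWithinAt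
    · exact fun t _ => (hψd t).differentiableAt.differentiableWithinAt
    · intro t ht
      rw [interior_Icc] at ht
      rw [(hψd t).deriv]
      have e1 : ⟪f' (a + t • (b - a)), b - a⟫ - ⟪f' a, b - a⟫
          = ⟪f' (a + t • (b - a)) - f' a, b - a⟫ := (inner_sub_left _ _ _).symm
      have e2 := real_inner_le_norm (f' (a + t • (b - a)) - f' a) (b - a)
      have e3 := hlip (a + t • (b - a)) a
      have e4 : ‖a + t • (b - a) - a‖ = t * ‖b - a‖ := by
        rw [add_sub_cancel_left, norm_smul, Real.norm_eq_abs, abs_of_pos ht.1]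
      rw [e4] at e3
      have hn : (0:ℝ) ≤ ‖b - a‖ := norm_nonneg _
      nlinarith [mul_le_mul_of_nonneg_right (e3.trans_eq' rfl) hn]
  have h01 := hanti (Set.mem_Icc.2 ⟨le_refl 0, zero_le_one⟩) (Set.mem_Icc.2 ⟨zero_le_one, le_refl 1⟩) zero_le_one
  have e : a + (b - a) = b := by abel
  simp only [hψ, zero_smul, add_zero, one_smul, one_pow, one_mul, zero_mul, sub_zero, mul_zero, e] at h01
  nlinarith [h01]


lemma prox_aux {H : Type*} [NormedAddCommGroup H] [InnerProductSpace ℝ H]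
    {g : H → EReal} {γ : ℝ} (hγ : 0 < γ)
    (hgconv : ∀ x y : H, ∀ t : ℝ, 0 ≤ t → t ≤ 1 →
      g (t • x + (1 - t) • y) ≤ (t : EReal) * g x + ((1 - t : ℝ) : EReal) * g y)
    (hgnebot : ∀ x, g x ≠ ⊥)
    (w p z : H)
    (hTp : ∀ u : H, g w + (((2 * γ)⁻¹ * ‖w - p‖ ^ 2 : ℝ) : EReal) ≤
      g u + (((2 * γ)⁻¹ * ‖u - p‖ ^ 2 : ℝ) : EReal))
    (hz : g z ≠ ⊤) :
    g w ≠ ⊤ ∧ (g w).toReal ≤ (g z).toReal + γ⁻¹ * ⟪w - p, z - w⟫ := by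
  have hgw : g w ≠ ⊤ := by
    intro htop
    have h1 := hTp z
    rw [htop, EReal.top_add_coe] at h1
    exact (EReal.add_lt_top hz (EReal.coe_ne_top _)).ne (top_le_iff.1 h1)
  refine ⟨hgw, ?_⟩
  set a := (g w).toReal with ha'
  set b := (g z).toReal with hb'
  have ha : g w = (a : EReal) := (EReal.coe_toReal hgw (hgnebot w)).symm
  have hb : g z = (b : EReal) := (EReal.coe_toReal hz (hgnebot z)).symm
  have hc : (0:ℝ) < (2 * γ)⁻¹ := by positivity
  have h2c : 2 * (2 * γ)⁻¹ = γ⁻¹ := by field_simp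
  have step : ∀ t : ℝ, 0 < t → t ≤ 1 →
      a ≤ b + γ⁻¹ * ⟪w - p, z - w⟫ + t * ((2 * γ)⁻¹ * ‖z - w‖ ^ 2) := by
    intro t ht0 ht1
    set u := t • z + (1 - t) • w with hu'
    have hgu : g u ≤ ((t * b + (1 - t) * a : ℝ) : EReal) := by
      have h3 := hgconv z w t ht0.le ht1
      rw [ha, hb] at h3
      rw [EReal.coe_add, EReal.coe_mul, EReal.coe_mul]
      exact h3
    have h3 : ((a + (2 * γ)⁻¹ * ‖w - p‖ ^ 2 : ℝ) : EReal) ≤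
        ((t * b + (1 - t) * a + (2 * γ)⁻¹ * ‖u - p‖ ^ 2 : ℝ) : EReal) := by
      rw [EReal.coe_add, EReal.coe_add, ← ha]
      exact (hTp u).trans (add_le_add hgu le_rfl)
    have h4 := EReal.coe_le_coe_iff.1 h3
    have hu : u - p = (w - p) + t • (z - w) := by
      rw [hu']; module
    have hexp : ‖u - p‖ ^ 2 = ‖w - p‖ ^ 2 + 2 * (t * ⟪w - p, z - w⟫) + t ^ 2 * ‖z - w‖ ^ 2 := by
      rw [hu, norm_add_sq_real, real_inner_smul_right, norm_smul, Real.norm_eq_abs,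
        abs_of_pos ht0, mul_pow]
    rw [hexp] at h4
    have key : t * a ≤ t * (b + γ⁻¹ * ⟪w - p, z - w⟫ + t * ((2 * γ)⁻¹ * ‖z - w‖ ^ 2)) := by
      have e : t * (γ⁻¹ * ⟪w - p, z - w⟫) = t * (2 * ((2 * γ)⁻¹) * ⟪w - p, z - w⟫) := by
        rw [← h2c]
      nlinarith [h4, e]
    exact le_of_mul_le_mul_left key ht0
  have hd : (0:ℝ) ≤ (2 * γ)⁻¹ * ‖z - w‖ ^ 2 := by positivity
  set d := (2 * γ)⁻¹ * ‖z - w‖ ^ 2 with hd'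
  have : ∀ ε : ℝ, 0 < ε → a ≤ b + γ⁻¹ * ⟪w - p, z - w⟫ + ε := by
    intro ε hε
    have ht0 : 0 < min 1 (ε / (d + 1)) := lt_min one_pos (by positivity)
    have := step _ ht0 (min_le_left _ _)
    have htd : min 1 (ε / (d + 1)) * d ≤ ε := by
      calc min 1 (ε / (d + 1)) * d ≤ (ε / (d + 1)) * d :=
            mul_le_mul_of_nonneg_right (min_le_right _ _) hd
        _ ≤ (ε / (d + 1)) * (d + 1) := by
            apply mul_le_mul_of_nonneg_left (by linarith) (by positivity)
        _ = ε := by field_simp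
    linarith
  linarith [le_of_forall_pos_le_add (fun ε hε => this ε hε)]

lemma key_aux {H : Type*} [NormedAddCommGroup H] [InnerProductSpace ℝ H] [CompleteSpace H]
    {f : H → ℝ} {f' : H → H} {g : H → EReal} {β γ : ℝ}
    (hβ : 0 < β) (hγ : 0 < γ) (hγβ : γ ≤ 1 / β)
    (hfconv : ConvexOn ℝ Set.univ f)
    (hf' : ∀ x, HasGradientAt f (f' x) x)
    (hlip : ∀ x y, ‖f' x - f' y‖ ≤ β * ‖x - y‖)
    (hgconv : ∀ x y : H, ∀ t : ℝ, 0 ≤ t → t ≤ 1 →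
      g (t • x + (1 - t) • y) ≤ (t : EReal) * g x + ((1 - t : ℝ) : EReal) * g y)
    (hgnebot : ∀ x, g x ≠ ⊥)
    {T : H → H}
    (hT : ∀ x u : H,
      g (T x) + (((2 * γ)⁻¹ * ‖T x - (x - γ • f' x)‖ ^ 2 : ℝ) : EReal) ≤
      g u + (((2 * γ)⁻¹ * ‖u - (x - γ • f' x)‖ ^ 2 : ℝ) : EReal))
    (y z : H) (hz : g z ≠ ⊤) :
    g (T y) ≠ ⊤ ∧ (g (T y)).toReal + f (T y) ≤
      (g z).toReal + f z + (2 * γ)⁻¹ * (‖y - z‖ ^ 2 - ‖T y - z‖ ^ 2) := by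
  set q := T y with hq
  set p := y - γ • f' y with hp
  obtain ⟨hqtop, hD⟩ := prox_aux hγ hgconv hgnebot q p z (hT y) hz
  refine ⟨hqtop, ?_⟩
  set a := (g q).toReal
  set b := (g z).toReal
  have h2c : 2 * (2 * γ)⁻¹ = γ⁻¹ := by field_simp
  have hsplit : γ⁻¹ * ⟪q - p, z - q⟫ = γ⁻¹ * ⟪q - y, z - q⟫ + ⟪f' y, z - q⟫ := by
    have e : q - p = (q - y) + γ • f' y := by rw [hp]; abel
    rw [e, inner_add_left, real_inner_smul_left, mul_add, ← mul_assoc, inv_mul_cancel₀ hγ.ne',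
      one_mul]
  have hC : f q ≤ f y + ⟪f' y, q - y⟫ + β / 2 * ‖q - y‖ ^ 2 := descent_aux hβ hf' hlip y q
  have hB : f y + ⟪f' y, z - y⟫ ≤ f z := grad_convex_ineq hfconv hf' y z
  have e2 : ⟪f' y, q - y⟫ + ⟪f' y, z - q⟫ = ⟪f' y, z - y⟫ := by
    rw [← inner_add_right]
    congr 1
    abel
  have hβγ : β / 2 * ‖q - y‖ ^ 2 ≤ (2 * γ)⁻¹ * ‖q - y‖ ^ 2 := by
    apply mul_le_mul_of_nonneg_right _ (by positivity)
    have hbγ : β * γ ≤ 1 := by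
      rw [le_div_iff₀ hβ] at hγβ; linarith
    rw [inv_eq_one_div, le_div_iff₀ (by positivity)]
    nlinarith
  have e3 : ‖y - z‖ ^ 2 = ‖q - y‖ ^ 2 + 2 * ⟪q - y, z - q⟫ + ‖q - z‖ ^ 2 := by
    have e : y - z = -((q - y) + (z - q)) := by abel
    rw [e, norm_neg, norm_add_sq_real, norm_sub_rev z q]
  have hid : (2 * γ)⁻¹ * (‖y - z‖ ^ 2 - ‖q - z‖ ^ 2)
      = (2 * γ)⁻¹ * ‖q - y‖ ^ 2 + γ⁻¹ * ⟪q - y, z - q⟫ := by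
    rw [e3]
    linear_combination (⟪q - y, z - q⟫ : ℝ) * h2c
  linarith [hD, hC, hB, hβγ, e2, hid, hsplit]


theorem stmt_17 {H : Type*} [NormedAddCommGroup H] [InnerProductSpace ℝ H]
    [CompleteSpace H]
    (f : H → ℝ) (f' : H → H) (g : H → EReal) (β γ : ℝ)
    (hβ : 0 < β) (hγ : 0 < γ) (hγβ : γ ≤ 1 / β)
    (hfconv : ConvexOn ℝ Set.univ f)
    (hf' : ∀ x, HasGradientAt f (f' x) x)
    (hlip : ∀ x y, ‖f' x - f' y‖ ≤ β * ‖x - y‖)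
    (hgconv : ∀ x y : H, ∀ t : ℝ, 0 ≤ t → t ≤ 1 →
      g (t • x + (1 - t) • y) ≤ (t : EReal) * g x + ((1 - t : ℝ) : EReal) * g y)
    (hglsc : LowerSemicontinuous g)
    (hgproper : ∃ x, g x ≠ ⊤)
    (hgnebot : ∀ x, g x ≠ ⊥)
    (T : H → H)
    (hT : ∀ x u : H,
      g (T x) + (((2 * γ)⁻¹ * ‖T x - (x - γ • f' x)‖ ^ 2 : ℝ) : EReal) ≤
      g u + (((2 * γ)⁻¹ * ‖u - (x - γ • f' x)‖ ^ 2 : ℝ) : EReal))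
    (h : H → EReal) (hh : ∀ x, h x = (f x : EReal) + g x)
    (y xm : H) (τ τp : ℝ) (hτ : 1 ≤ τ) (hτp : 1 ≤ τp)
    (x yp xp : H) (hx : x = T y)
    (hyp : yp = x + ((τ - 1) / τp) • (x - xm)) (hxp : xp = T yp) :
    ∀ z : H, h z ≠ ⊤ →
      ((τp ^ 2 : ℝ) : EReal) * (h xp - h z) +
        (((2 * γ)⁻¹ * ‖τp • xp - (τp - 1) • x - z‖ ^ 2 : ℝ) : EReal) ≤
      ((τp * (τp - 1) : ℝ) : EReal) * (h x - h z) +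
        (((2 * γ)⁻¹ * ‖τ • x - (τ - 1) • xm - z‖ ^ 2 : ℝ) : EReal) := by
  intro z hz
  have hτp0 : (0:ℝ) < τp := lt_of_lt_of_le one_pos hτp
  have hτpne : τp ≠ 0 := hτp0.ne'
  have hgz : g z ≠ ⊤ := by
    intro htop
    exact hz (by rw [hh z, htop, EReal.coe_add_top])
  -- finiteness of g x
  have keyx := key_aux hβ hγ hγβ hfconv hf' hlip hgconv hgnebot hT y z hgz
  rw [← hx] at keyx
  obtain ⟨hgx, -⟩ := keyx
  set bx := (g x).toReal with hbx
  set bz := (g z).toReal with hbz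
  set t : ℝ := 1 / τp with ht
  have ht0 : (0:ℝ) ≤ t := by positivity
  have ht1 : t ≤ 1 := by rw [ht, div_le_one hτp0]; exact hτp
  set v : H := t • z + (1 - t) • x with hv
  have hgv_le : g v ≤ ((t * bz + (1 - t) * bx : ℝ) : EReal) := by
    have h3 := hgconv z x t ht0 ht1
    rw [← EReal.coe_toReal hgz (hgnebot z), ← EReal.coe_toReal hgx (hgnebot x)] at h3
    rw [EReal.coe_add, EReal.coe_mul, EReal.coe_mul]
    exact h3
  have hgv : g v ≠ ⊤ := ne_top_of_le_ne_top (EReal.coe_ne_top _) hgv_le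
  have hv_toReal : (g v).toReal ≤ t * bz + (1 - t) * bx := by
    rw [← EReal.coe_toReal hgv (hgnebot v)] at hgv_le
    exact EReal.coe_le_coe_iff.1 hgv_le
  have hfv : f v ≤ t * f z + (1 - t) * f x :=
    hfconv.2 (Set.mem_univ z) (Set.mem_univ x) ht0 (by linarith) (by ring)
  have keyp := key_aux hβ hγ hγβ hfconv hf' hlip hgconv hgnebot hT yp v hgv
  rw [← hxp] at keyp
  obtain ⟨hgxp, hK⟩ := keyp
  set bxp := (g xp).toReal with hbxp
  -- norm identities
  have huyp : τ • x - (τ - 1) • xm - z = τp • (yp - v) := by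
    rw [hyp, hv, ht]
    match_scalars <;> field_simp <;> ring
  have hupx : τp • xp - (τp - 1) • x - z = τp • (xp - v) := by
    rw [hv, ht]
    match_scalars <;> field_simp
  have hn1 : ‖τ • x - (τ - 1) • xm - z‖ ^ 2 = τp ^ 2 * ‖yp - v‖ ^ 2 := by
    rw [huyp, norm_smul, Real.norm_eq_abs, mul_pow, sq_abs]
  have hn2 : ‖τp • xp - (τp - 1) • x - z‖ ^ 2 = τp ^ 2 * ‖xp - v‖ ^ 2 := by
    rw [hupx, norm_smul, Real.norm_eq_abs, mul_pow, sq_abs]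
  -- rewrite goal in reals
  have hhx : h x = ((f x + bx : ℝ) : EReal) := by
    rw [hh x, ← EReal.coe_toReal hgx (hgnebot x), ← EReal.coe_add]
  have hhz : h z = ((f z + bz : ℝ) : EReal) := by
    rw [hh z, ← EReal.coe_toReal hgz (hgnebot z), ← EReal.coe_add]
  have hhxp : h xp = ((f xp + bxp : ℝ) : EReal) := by
    rw [hh xp, ← EReal.coe_toReal hgxp (hgnebot xp), ← EReal.coe_add]
  rw [hhx, hhz, hhxp, ← EReal.coe_sub, ← EReal.coe_sub, ← EReal.coe_mul, ← EReal.coe_mul,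
    ← EReal.coe_add, ← EReal.coe_add, EReal.coe_le_coe_iff]
  -- real inequality
  set c : ℝ := (2 * γ)⁻¹ with hc
  -- convexity bound multiplied by τp
  have hv2 : τp * (g v).toReal ≤ bz + (τp - 1) * bx := by
    have e : τp * (t * bz + (1 - t) * bx) = bz + (τp - 1) * bx := by
      rw [ht]; field_simp
    calc τp * (g v).toReal ≤ τp * (t * bz + (1 - t) * bx) :=
          mul_le_mul_of_nonneg_left hv_toReal hτp0.le
      _ = bz + (τp - 1) * bx := e
  have hfv2 : τp * f v ≤ f z + (τp - 1) * f x := by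
    have e : τp * (t * f z + (1 - t) * f x) = f z + (τp - 1) * f x := by
      rw [ht]; field_simp
    calc τp * f v ≤ τp * (t * f z + (1 - t) * f x) :=
          mul_le_mul_of_nonneg_left hfv hτp0.le
      _ = f z + (τp - 1) * f x := e
  -- key bound multiplied by τp^2
  have hK2 : τp ^ 2 * (bxp + f xp) ≤
      τp ^ 2 * ((g v).toReal + f v) + c * (τp ^ 2 * ‖yp - v‖ ^ 2 - τp ^ 2 * ‖xp - v‖ ^ 2) := by
    have e : τp ^ 2 * ((g v).toReal + f v + c * (‖yp - v‖ ^ 2 - ‖xp - v‖ ^ 2))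
        = τp ^ 2 * ((g v).toReal + f v)
          + c * (τp ^ 2 * ‖yp - v‖ ^ 2 - τp ^ 2 * ‖xp - v‖ ^ 2) := by ring
    calc τp ^ 2 * (bxp + f xp)
        ≤ τp ^ 2 * ((g v).toReal + f v + c * (‖yp - v‖ ^ 2 - ‖xp - v‖ ^ 2)) :=
          mul_le_mul_of_nonneg_left hK (sq_nonneg τp)
      _ = _ := e
  have h3 : τp * (τp * ((g v).toReal + f v)) ≤ τp * ((bz + f z) + (τp - 1) * (bx + f x)) := by
    apply mul_le_mul_of_nonneg_left _ hτp0.le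
    linarith [hv2, hfv2]
  rw [hn1, hn2]
  nlinarith [hK2, h3]
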